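/- Let $h:\mathbb{R}_+\to\mathbb{R}$ be smooth with compact support in $[a_0,a_1]$, $0<a_0<a_1$, and $\int_0^\infty s\,h(s)\,ds = 1$. Define $g_\lambda(r) = \lambda^2 h(\lambda r)$. Then for every fixed $r > 0$ and $\gamma \in [-1,1)$, $\lim_{\lambda\to\infty} \frac{\partial}{\partial r}\Big(\frac{v^\gamma_\alpha(g_\lambda)(r)}{r}\Big) = -\frac{2\pi(3+\gamma)C(\gamma)}{r^{4+\gamma}}$. -/

import Mathlib

open MeasureTheory Real Filter

/-- The constant `C(γ) = Γ((1+γ)/2) / (2^(1-γ) π Γ((1-γ)/2))`. -/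
noncomputable def Cgamma (γ : ℝ) : ℝ :=
  Real.Gamma ((1 + γ) / 2) / (2 ^ (1 - γ) * Real.pi * Real.Gamma ((1 - γ) / 2))

/-- Angular component of the gSQG velocity generated by a radial function with
radial profile `g` (no principal value needed away from the support). -/
noncomputable def vAlphaNP (γ : ℝ) (g : ℝ → ℝ) (r : ℝ) : ℝ :=
  Cgamma γ * ∫ r' in Set.Ioi (0 : ℝ), ∫ α' in Set.Icc (-Real.pi) Real.pi,
    r' * (r - r' * Real.cos α') /
      |r ^ 2 + r' ^ 2 - 2 * r * r' * Real.cos α'| ^ ((3 + γ) / 2) * g r'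


open Set intervalIntegral

noncomputable def qq (t u α : ℝ) : ℝ := 1 - 2*(u*Real.cos α)*t + u^2*t^2

noncomputable def ff (γ t u α : ℝ) : ℝ :=
  u * ((1 - u*Real.cos α*t) * qq t u α ^ (-((3+γ)/2)))

noncomputable def ff' (γ t u α : ℝ) : ℝ :=
  u * (-(u*Real.cos α) * qq t u α ^ (-((3+γ)/2))
    + (1 - u*Real.cos α*t) * ((2*u^2*t - 2*(u*Real.cos α)) * (-((3+γ)/2)) * qq t u α ^ (-((3+γ)/2) - 1)))

lemma qq_nonneg (t u α : ℝ) : 0 ≤ qq t u α := by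
  have h := Real.sin_sq_add_cos_sq α
  have key : qq t u α = (1 - u*Real.cos α*t)^2 + (u*Real.sin α*t)^2 := by
    unfold qq; linear_combination (-(u^2*t^2)) * h
  rw [key]; positivity

lemma qq_quarter {a₁ t u : ℝ} (ha₁ : 0 < a₁) (ht : |t| ≤ (2*a₁)⁻¹) (hu : |u| ≤ a₁) (α : ℝ) :
    1/4 ≤ qq t u α := by
  have hx : |t*u| ≤ 1/2 := by
    rw [abs_mul]
    calc |t| * |u| ≤ (2*a₁)⁻¹ * a₁ := mul_le_mul ht hu (abs_nonneg u) (by positivity)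
      _ = 1/2 := by field_simp
  have habs : |u*Real.cos α*t| ≤ |t*u| := by
    rw [abs_mul, abs_mul]
    calc |u| * |Real.cos α| * |t| ≤ |u| * 1 * |t| := by
          gcongr; exact Real.abs_cos_le_one α
      _ = |t*u| := by rw [abs_mul]; ring
  have hA : u*Real.cos α*t ≤ |t*u| := le_trans (le_abs_self _) habs
  unfold qq
  nlinarith [sq_abs (t*u), sq_nonneg (1 - |t*u|), abs_nonneg (t*u)]

lemma qq_pos {a₁ t u : ℝ} (ha₁ : 0 < a₁) (ht : |t| ≤ (2*a₁)⁻¹) (hu : |u| ≤ a₁) (α : ℝ) :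
    0 < qq t u α := lt_of_lt_of_le (by norm_num) (qq_quarter ha₁ ht hu α)

lemma qq_cont : Continuous (fun p : ℝ×ℝ×ℝ => qq p.1 p.2.1 p.2.2) := by
  unfold qq; fun_prop

lemma measurable_rpow_const (c : ℝ) : Measurable fun x : ℝ => x ^ c :=
  measurable_of_continuousOn_compl_singleton 0
    (fun x hx => (Real.continuousAt_rpow_const x c (Or.inl hx)).continuousWithinAt)

lemma meas_ff (γ : ℝ) : Measurable (fun p : ℝ×ℝ×ℝ => ff γ p.1 p.2.1 p.2.2) := by
  unfold ff
  exact Measurable.mul (by fun_prop) (Measurable.mul (by fun_prop)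
    ((measurable_rpow_const (-((3+γ)/2))).comp qq_cont.measurable))

lemma meas_ff' (γ : ℝ) : Measurable (fun p : ℝ×ℝ×ℝ => ff' γ p.1 p.2.1 p.2.2) := by
  unfold ff'
  apply Measurable.mul (by fun_prop)
  apply Measurable.add
  · exact Measurable.mul (by fun_prop)
      ((measurable_rpow_const (-((3+γ)/2))).comp qq_cont.measurable)
  · exact Measurable.mul (by fun_prop) (Measurable.mul (by fun_prop)
      ((measurable_rpow_const (-((3+γ)/2) - 1)).comp qq_cont.measurable))

lemma contAt_ff (γ : ℝ) {p : ℝ×ℝ×ℝ} (hq : qq p.1 p.2.1 p.2.2 ≠ 0) :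
    ContinuousAt (fun p : ℝ×ℝ×ℝ => ff γ p.1 p.2.1 p.2.2) p := by
  unfold ff
  exact ((by fun_prop : Continuous fun p : ℝ×ℝ×ℝ => p.2.1).continuousAt).mul
    ((((by fun_prop : Continuous fun p : ℝ×ℝ×ℝ => 1 - p.2.1*Real.cos p.2.2*p.1)).continuousAt).mul
      (qq_cont.continuousAt.rpow_const (Or.inl hq)))

lemma contAt_ff' (γ : ℝ) {p : ℝ×ℝ×ℝ} (hq : qq p.1 p.2.1 p.2.2 ≠ 0) :
    ContinuousAt (fun p : ℝ×ℝ×ℝ => ff' γ p.1 p.2.1 p.2.2) p := by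
  unfold ff'
  apply ContinuousAt.mul ((by fun_prop : Continuous fun p : ℝ×ℝ×ℝ => p.2.1).continuousAt)
  apply ContinuousAt.add
  · exact ((by fun_prop : Continuous fun p : ℝ×ℝ×ℝ => -(p.2.1*Real.cos p.2.2)).continuousAt).mul
      (qq_cont.continuousAt.rpow_const (Or.inl hq))
  · exact (((by fun_prop : Continuous fun p : ℝ×ℝ×ℝ => 1 - p.2.1*Real.cos p.2.2*p.1)).continuousAt).mul
      ((((by fun_prop : Continuous fun p : ℝ×ℝ×ℝ => 2*p.2.1^2*p.1 - 2*(p.2.1*Real.cos p.2.2)).continuousAt).mul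
        continuousAt_const).mul (qq_cont.continuousAt.rpow_const (Or.inl hq)))

lemma hasDerivAt_qq (t u α : ℝ) :
    HasDerivAt (fun x => qq x u α) (-(2*(u*Real.cos α)) + u^2*(2*t)) t := by
  unfold qq
  have h1 : HasDerivAt (fun x : ℝ => 1 - 2*(u*Real.cos α)*x) (-(2*(u*Real.cos α))) t := by
    simpa using ((hasDerivAt_id t).const_mul (2*(u*Real.cos α))).const_sub 1
  have h2 : HasDerivAt (fun x : ℝ => u^2*x^2) (u^2*(2*t)) t := by
    simpa using (hasDerivAt_pow 2 t).const_mul (u^2)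
  exact h1.add h2

lemma hasDerivAt_ff (γ : ℝ) {t u α : ℝ} (hq : qq t u α ≠ 0) :
    HasDerivAt (fun x => ff γ x u α) (ff' γ t u α) t := by
  have hrp : HasDerivAt (fun x => qq x u α ^ (-((3+γ)/2)))
      ((-(2*(u*Real.cos α)) + u^2*(2*t)) * (-((3+γ)/2)) * qq t u α ^ (-((3+γ)/2) - 1)) t :=
    (hasDerivAt_qq t u α).rpow_const (Or.inl hq)
  have hlin : HasDerivAt (fun x : ℝ => 1 - u*Real.cos α*x) (-(u*Real.cos α)) t := by
    simpa using ((hasDerivAt_id t).const_mul (u*Real.cos α)).const_sub 1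
  have H := (hlin.mul hrp).const_mul u
  refine H.congr_deriv ?_
  unfold ff'
  ring

lemma ff_zero (γ u α : ℝ) : ff γ 0 u α = u := by
  unfold ff qq
  norm_num

lemma ff'_zero (γ u α : ℝ) : ff' γ 0 u α = (2+γ) * u^2 * Real.cos α := by
  unfold ff' qq
  norm_num
  ring

lemma exists_bound (g : ℝ → ℝ → ℝ → ℝ) {a₁ : ℝ} (ha₁ : 0 < a₁)
    (hgc : ∀ p : ℝ×ℝ×ℝ, qq p.1 p.2.1 p.2.2 ≠ 0 →
      ContinuousAt (fun p : ℝ×ℝ×ℝ => g p.1 p.2.1 p.2.2) p) :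
    ∃ M : ℝ, ∀ x u α : ℝ, |x| ≤ (2*a₁)⁻¹ → |u| ≤ a₁ → α ∈ Set.Icc (-Real.pi) Real.pi →
      |g x u α| ≤ M := by
  have hcompact : IsCompact ((Set.Icc (-(2*a₁)⁻¹) ((2*a₁)⁻¹)) ×ˢ
      ((Set.Icc (-a₁) a₁) ×ˢ (Set.Icc (-Real.pi) Real.pi))) :=
    isCompact_Icc.prod (isCompact_Icc.prod isCompact_Icc)
  have hcont : ContinuousOn (fun p : ℝ×ℝ×ℝ => g p.1 p.2.1 p.2.2)
      ((Set.Icc (-(2*a₁)⁻¹) ((2*a₁)⁻¹)) ×ˢ ((Set.Icc (-a₁) a₁) ×ˢ (Set.Icc (-Real.pi) Real.pi))) := by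
    intro p hp
    obtain ⟨hp1, hp2, hp3⟩ := hp
    have hq : qq p.1 p.2.1 p.2.2 ≠ 0 :=
      (qq_pos ha₁ (abs_le.mpr ⟨hp1.1, hp1.2⟩) (abs_le.mpr ⟨hp2.1, hp2.2⟩) p.2.2).ne'
    exact (hgc p hq).continuousWithinAt
  obtain ⟨M, hM⟩ := hcompact.exists_bound_of_continuousOn hcont
  refine ⟨M, fun x u α hx hu hα => ?_⟩
  have := hM (x, u, α) ⟨by simpa using abs_le.mp hx, by simpa using abs_le.mp hu, hα⟩
  simpa [Real.norm_eq_abs] using this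

lemma cont_slice (g : ℝ → ℝ → ℝ → ℝ) {a₁ t u : ℝ} (ha₁ : 0 < a₁)
    (hgc : ∀ p : ℝ×ℝ×ℝ, qq p.1 p.2.1 p.2.2 ≠ 0 →
      ContinuousAt (fun p : ℝ×ℝ×ℝ => g p.1 p.2.1 p.2.2) p)
    (ht : |t| ≤ (2*a₁)⁻¹) (hu : |u| ≤ a₁) :
    Continuous (fun α => g t u α) := by
  rw [continuous_iff_continuousAt]
  intro α
  have hq : qq t u α ≠ 0 := (qq_pos ha₁ ht hu α).ne'
  have h2 : ContinuousAt (fun α : ℝ => ((t,u,α) : ℝ×ℝ×ℝ)) α :=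
    (continuous_const.prodMk (continuous_const.prodMk continuous_id)).continuousAt
  have h3 : ContinuousAt ((fun p : ℝ×ℝ×ℝ => g p.1 p.2.1 p.2.2) ∘ (fun α : ℝ => (t,u,α))) α :=
    ContinuousAt.comp (hgc (t,u,α) hq) h2
  exact h3

lemma meas_inner (g : ℝ → ℝ → ℝ → ℝ)
    (hg : Measurable (fun p : ℝ×ℝ×ℝ => g p.1 p.2.1 p.2.2)) (x : ℝ) :
    StronglyMeasurable (fun u => ∫ α in (-Real.pi)..Real.pi, g x u α) := by
  have heq : (fun u => ∫ α in (-Real.pi)..Real.pi, g x u α)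
      = fun u => ∫ α, g x u α ∂(volume.restrict (Set.Ioc (-Real.pi) Real.pi)) := by
    funext u
    rw [intervalIntegral.integral_of_le (by linarith [Real.pi_pos])]
  rw [heq]
  apply MeasureTheory.StronglyMeasurable.integral_prod_right
    (f := fun u α => g x u α)
  exact (hg.comp (by fun_prop : Measurable (fun p : ℝ×ℝ => (x, p.1, p.2)))).stronglyMeasurable

lemma hasDeriv_inner (γ : ℝ) {a₁ t u : ℝ} (ha₁ : 0 < a₁) (ht : |t| < (2*a₁)⁻¹) (hu : |u| ≤ a₁)
    {M : ℝ} (hM : ∀ x u α : ℝ, |x| ≤ (2*a₁)⁻¹ → |u| ≤ a₁ → α ∈ Set.Icc (-Real.pi) Real.pi →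
      |ff' γ x u α| ≤ M) :
    HasDerivAt (fun x => ∫ α in (-Real.pi)..Real.pi, ff γ x u α)
      (∫ α in (-Real.pi)..Real.pi, ff' γ t u α) t := by
  have hπ : -Real.pi ≤ Real.pi := by linarith [Real.pi_pos]
  have hιsub : Set.uIoc (-Real.pi) Real.pi ⊆ Set.Icc (-Real.pi) Real.pi := by
    rw [Set.uIoc_of_le hπ]; exact Set.Ioc_subset_Icc_self
  have hεpos : 0 < (2*a₁)⁻¹ - |t| := sub_pos.mpr ht
  have hball : ∀ x ∈ Metric.ball t ((2*a₁)⁻¹ - |t|), |x| ≤ (2*a₁)⁻¹ := by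
    intro x hx
    rw [Metric.mem_ball, Real.dist_eq] at hx
    calc |x| ≤ |x - t| + |t| := by simpa using abs_add_le (x-t) t
      _ ≤ (2*a₁)⁻¹ := by linarith
  refine (intervalIntegral.hasDerivAt_integral_of_dominated_loc_of_deriv_le
    (F := fun x α => ff γ x u α) (F' := fun x α => ff' γ x u α) (bound := fun _ => M)
    (Metric.ball_mem_nhds t hεpos) ?_ ?_ ?_ ?_ ?_ ?_).2
  · filter_upwards with x
    exact (((meas_ff γ).comp
      (by fun_prop : Measurable (fun α : ℝ => ((x,u,α) : ℝ×ℝ×ℝ)))).aestronglyMeasurable)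
  · apply Continuous.intervalIntegrable
    exact cont_slice (ff γ) ha₁ (fun p hq => contAt_ff γ hq) ht.le hu
  · exact ((meas_ff' γ).comp
      (by fun_prop : Measurable (fun α : ℝ => ((t,u,α) : ℝ×ℝ×ℝ)))).aestronglyMeasurable
  · filter_upwards with α hα x hx
    exact hM x u α (hball x hx) hu (hιsub hα)
  · exact intervalIntegrable_const
  · filter_upwards with α hα x hx
    exact hasDerivAt_ff γ (qq_pos ha₁ (hball x hx) hu α).ne'

noncomputable def Xi (γ : ℝ) (h : ℝ → ℝ) (a₀ a₁ t : ℝ) : ℝ :=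
  ∫ u in a₀..a₁, (∫ α in (-Real.pi)..Real.pi, ff γ t u α) * h u

noncomputable def Xi' (γ : ℝ) (h : ℝ → ℝ) (a₀ a₁ t : ℝ) : ℝ :=
  ∫ u in a₀..a₁, (∫ α in (-Real.pi)..Real.pi, ff' γ t u α) * h u

lemma norm_inner_le (g : ℝ → ℝ → ℝ → ℝ) {M t u a₁ : ℝ} (ha₁ : 0 < a₁)
    (hM : ∀ x u α : ℝ, |x| ≤ (2*a₁)⁻¹ → |u| ≤ a₁ → α ∈ Set.Icc (-Real.pi) Real.pi →
      |g x u α| ≤ M)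
    (ht : |t| ≤ (2*a₁)⁻¹) (hu : |u| ≤ a₁) :
    ‖∫ α in (-Real.pi)..Real.pi, g t u α‖ ≤ M * (2*Real.pi) := by
  have hπ : (0:ℝ) < Real.pi := Real.pi_pos
  have h2π : |Real.pi - -Real.pi| = 2*Real.pi := by
    rw [sub_neg_eq_add, abs_of_nonneg (by linarith)]; ring
  calc ‖∫ α in (-Real.pi)..Real.pi, g t u α‖
      ≤ M * |Real.pi - -Real.pi| := by
        apply intervalIntegral.norm_integral_le_of_norm_le_const
        intro α hα
        have hα' : α ∈ Set.Icc (-Real.pi) Real.pi := by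
          have : Set.uIoc (-Real.pi) Real.pi ⊆ Set.Icc (-Real.pi) Real.pi := by
            rw [Set.uIoc_of_le (by linarith)]; exact Set.Ioc_subset_Icc_self
          exact this hα
        simpa [Real.norm_eq_abs] using hM t u α ht hu hα'
    _ = M * (2*Real.pi) := by rw [h2π]

lemma hasDeriv_Xi (γ : ℝ) (h : ℝ → ℝ) (hc : Continuous h) {a₀ a₁ t : ℝ}
    (ha₀ : 0 < a₀) (ha₁ : a₀ < a₁) (ht : |t| < (2*a₁)⁻¹) :
    HasDerivAt (Xi γ h a₀ a₁) (Xi' γ h a₀ a₁ t) t := by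
  obtain ⟨M, hM⟩ := exists_bound (ff' γ) (ha₀.trans ha₁) (fun p hq => contAt_ff' γ hq)
  obtain ⟨Mf, hMf⟩ := exists_bound (ff γ) (ha₀.trans ha₁) (fun p hq => contAt_ff γ hq)
  have ha₁pos : 0 < a₁ := ha₀.trans ha₁
  have hιsub : Set.uIoc a₀ a₁ ⊆ Set.Icc a₀ a₁ := by
    rw [Set.uIoc_of_le ha₁.le]; exact Set.Ioc_subset_Icc_self
  have habs : ∀ u ∈ Set.Icc a₀ a₁, |u| ≤ a₁ := fun u hu =>
    abs_le.mpr ⟨by linarith [hu.1], hu.2⟩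
  have hεpos : 0 < (2*a₁)⁻¹ - |t| := sub_pos.mpr ht
  have hball : ∀ x ∈ Metric.ball t ((2*a₁)⁻¹ - |t|), |x| < (2*a₁)⁻¹ := by
    intro x hx
    rw [Metric.mem_ball, Real.dist_eq] at hx
    calc |x| ≤ |x - t| + |t| := by simpa using abs_add_le (x-t) t
      _ < (2*a₁)⁻¹ := by linarith
  have hmeas : ∀ x : ℝ, AEStronglyMeasurable
      (fun u => (∫ α in (-Real.pi)..Real.pi, ff γ x u α) * h u)
      (volume.restrict (Set.uIoc a₀ a₁)) :=
    fun x => ((meas_inner (ff γ) (meas_ff γ) x).mul hc.stronglyMeasurable).aestronglyMeasurable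
  have hmeas' : ∀ x : ℝ, AEStronglyMeasurable
      (fun u => (∫ α in (-Real.pi)..Real.pi, ff' γ x u α) * h u)
      (volume.restrict (Set.uIoc a₀ a₁)) :=
    fun x => ((meas_inner (ff' γ) (meas_ff' γ) x).mul hc.stronglyMeasurable).aestronglyMeasurable
  refine (intervalIntegral.hasDerivAt_integral_of_dominated_loc_of_deriv_le
    (F := fun x u => (∫ α in (-Real.pi)..Real.pi, ff γ x u α) * h u)
    (F' := fun x u => (∫ α in (-Real.pi)..Real.pi, ff' γ x u α) * h u)
    (bound := fun u => M * (2*Real.pi) * |h u|)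
    (Metric.ball_mem_nhds t hεpos) ?_ ?_ ?_ ?_ ?_ ?_).2
  · filter_upwards with x using hmeas x
  · rw [intervalIntegrable_iff]
    apply Integrable.mono' (g := fun u => Mf * (2*Real.pi) * |h u|)
    · exact (continuous_const.mul hc.abs).integrableOn_uIoc
    · exact hmeas t
    · rw [MeasureTheory.ae_restrict_iff' measurableSet_uIoc]
      filter_upwards with u hu
      rw [Real.norm_eq_abs, abs_mul]
      exact mul_le_mul_of_nonneg_right
        (by simpa [Real.norm_eq_abs] using
          norm_inner_le (ff γ) ha₁pos hMf ht.le (habs u (hιsub hu)))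
        (abs_nonneg _)
  · exact hmeas' t
  · filter_upwards with u hu x hx
    rw [Real.norm_eq_abs, abs_mul]
    exact mul_le_mul_of_nonneg_right
      (by simpa [Real.norm_eq_abs] using
        norm_inner_le (ff' γ) ha₁pos hM (hball x hx).le (habs u (hιsub hu)))
      (abs_nonneg _)
  · exact (continuous_const.mul hc.abs).intervalIntegrable _ _
  · filter_upwards with u hu x hx
    exact (hasDeriv_inner γ ha₁pos (hball x hx) (habs u (hιsub hu)) hM).mul_const (h u)

lemma qq_zero_left (u α : ℝ) : qq 0 u α = 1 := by unfold qq; ring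

lemma tendsto_slice (γ : ℝ) (g : ℝ → ℝ → ℝ → ℝ) (u α : ℝ)
    (hgc : ∀ p : ℝ×ℝ×ℝ, qq p.1 p.2.1 p.2.2 ≠ 0 →
      ContinuousAt (fun p : ℝ×ℝ×ℝ => g p.1 p.2.1 p.2.2) p)
    {l : Filter ℝ} (hl : l ≤ nhds 0) :
    Tendsto (fun t => g t u α) l (nhds (g 0 u α)) := by
  have hq : qq (0:ℝ) u α ≠ 0 := by rw [qq_zero_left]; norm_num
  have h1 : Tendsto (fun t : ℝ => ((t,u,α) : ℝ×ℝ×ℝ)) l (nhds ((0,u,α) : ℝ×ℝ×ℝ)) :=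
    ((continuous_id.prodMk continuous_const).tendsto 0).mono_left hl
  have h3 := Filter.Tendsto.comp (hgc ((0:ℝ),u,α) hq) h1
  exact h3

lemma tendsto_inner (γ : ℝ) (g : ℝ → ℝ → ℝ → ℝ) {a₁ u : ℝ} (ha₁ : 0 < a₁) (hu : |u| ≤ a₁)
    (hgm : Measurable (fun p : ℝ×ℝ×ℝ => g p.1 p.2.1 p.2.2))
    (hgc : ∀ p : ℝ×ℝ×ℝ, qq p.1 p.2.1 p.2.2 ≠ 0 →
      ContinuousAt (fun p : ℝ×ℝ×ℝ => g p.1 p.2.1 p.2.2) p)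
    {M : ℝ} (hM : ∀ x u α : ℝ, |x| ≤ (2*a₁)⁻¹ → |u| ≤ a₁ → α ∈ Set.Icc (-Real.pi) Real.pi →
      |g x u α| ≤ M) :
    Tendsto (fun t => ∫ α in (-Real.pi)..Real.pi, g t u α)
      (nhdsWithin 0 (Set.Ioo 0 ((2*a₁)⁻¹))) (nhds (∫ α in (-Real.pi)..Real.pi, g 0 u α)) := by
  have hιsub : Set.uIoc (-Real.pi) Real.pi ⊆ Set.Icc (-Real.pi) Real.pi := by
    rw [Set.uIoc_of_le (by linarith [Real.pi_pos])]; exact Set.Ioc_subset_Icc_self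
  apply intervalIntegral.tendsto_integral_filter_of_dominated_convergence (bound := fun _ => M)
  · filter_upwards with t
    exact ((hgm.comp
      (by fun_prop : Measurable (fun α : ℝ => ((t,u,α) : ℝ×ℝ×ℝ)))).aestronglyMeasurable)
  · filter_upwards [self_mem_nhdsWithin] with t htm
    filter_upwards with α hα
    have ht : |t| ≤ (2*a₁)⁻¹ := by
      rw [abs_of_pos htm.1]; exact htm.2.le
    simpa [Real.norm_eq_abs] using hM t u α ht hu (hιsub hα)
  · exact intervalIntegrable_const
  · filter_upwards with α hα
    exact tendsto_slice γ g u α hgc nhdsWithin_le_nhds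

lemma tendsto_Xi (γ : ℝ) (h : ℝ → ℝ) (hc : Continuous h) {a₀ a₁ : ℝ}
    (ha₀ : 0 < a₀) (ha₁ : a₀ < a₁) :
    Tendsto (Xi γ h a₀ a₁) (nhdsWithin 0 (Set.Ioo 0 ((2*a₁)⁻¹)))
      (nhds (∫ u in a₀..a₁, (2*Real.pi*u) * h u)) := by
  obtain ⟨Mf, hMf⟩ := exists_bound (ff γ) (ha₀.trans ha₁) (fun p hq => contAt_ff γ hq)
  have ha₁pos : 0 < a₁ := ha₀.trans ha₁
  have hιsub : Set.uIoc a₀ a₁ ⊆ Set.Icc a₀ a₁ := by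
    rw [Set.uIoc_of_le ha₁.le]; exact Set.Ioc_subset_Icc_self
  have habs : ∀ u ∈ Set.Icc a₀ a₁, |u| ≤ a₁ := fun u hu =>
    abs_le.mpr ⟨by linarith [hu.1], hu.2⟩
  apply intervalIntegral.tendsto_integral_filter_of_dominated_convergence
    (bound := fun u => Mf * (2*Real.pi) * |h u|)
  · filter_upwards with t
    exact ((meas_inner (ff γ) (meas_ff γ) t).mul hc.stronglyMeasurable).aestronglyMeasurable
  · filter_upwards [self_mem_nhdsWithin] with t htm
    filter_upwards with u hu
    have ht : |t| ≤ (2*a₁)⁻¹ := by rw [abs_of_pos htm.1]; exact htm.2.le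
    rw [Real.norm_eq_abs, abs_mul]
    exact mul_le_mul_of_nonneg_right
      (by simpa [Real.norm_eq_abs] using
        norm_inner_le (ff γ) ha₁pos hMf ht (habs u (hιsub hu)))
      (abs_nonneg _)
  · exact (continuous_const.mul hc.abs).intervalIntegrable _ _
  · filter_upwards with u hu
    have hinner := tendsto_inner γ (ff γ) ha₁pos (habs u (hιsub hu)) (meas_ff γ)
      (fun p hq => contAt_ff γ hq) hMf
    have hval : (∫ α in (-Real.pi)..Real.pi, ff γ 0 u α) = 2*Real.pi*u := by
      simp only [ff_zero]
      rw [intervalIntegral.integral_const, smul_eq_mul, sub_neg_eq_add]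
      ring
    rw [hval] at hinner
    exact hinner.mul_const (h u)

lemma tendsto_Xi' (γ : ℝ) (h : ℝ → ℝ) (hc : Continuous h) {a₀ a₁ : ℝ}
    (ha₀ : 0 < a₀) (ha₁ : a₀ < a₁) :
    Tendsto (Xi' γ h a₀ a₁) (nhdsWithin 0 (Set.Ioo 0 ((2*a₁)⁻¹))) (nhds 0) := by
  obtain ⟨M, hM⟩ := exists_bound (ff' γ) (ha₀.trans ha₁) (fun p hq => contAt_ff' γ hq)
  have ha₁pos : 0 < a₁ := ha₀.trans ha₁
  have hιsub : Set.uIoc a₀ a₁ ⊆ Set.Icc a₀ a₁ := by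
    rw [Set.uIoc_of_le ha₁.le]; exact Set.Ioc_subset_Icc_self
  have habs : ∀ u ∈ Set.Icc a₀ a₁, |u| ≤ a₁ := fun u hu =>
    abs_le.mpr ⟨by linarith [hu.1], hu.2⟩
  have hres : Tendsto (Xi' γ h a₀ a₁) (nhdsWithin 0 (Set.Ioo 0 ((2*a₁)⁻¹)))
      (nhds (∫ u in a₀..a₁, (0:ℝ))) := by
    apply intervalIntegral.tendsto_integral_filter_of_dominated_convergence
      (bound := fun u => M * (2*Real.pi) * |h u|)
    · filter_upwards with t
      exact ((meas_inner (ff' γ) (meas_ff' γ) t).mul hc.stronglyMeasurable).aestronglyMeasurable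
    · filter_upwards [self_mem_nhdsWithin] with t htm
      filter_upwards with u hu
      have ht : |t| ≤ (2*a₁)⁻¹ := by rw [abs_of_pos htm.1]; exact htm.2.le
      rw [Real.norm_eq_abs, abs_mul]
      exact mul_le_mul_of_nonneg_right
        (by simpa [Real.norm_eq_abs] using
          norm_inner_le (ff' γ) ha₁pos hM ht (habs u (hιsub hu)))
        (abs_nonneg _)
    · exact (continuous_const.mul hc.abs).intervalIntegrable _ _
    · filter_upwards with u hu
      have hinner := tendsto_inner γ (ff' γ) ha₁pos (habs u (hιsub hu)) (meas_ff' γ)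
        (fun p hq => contAt_ff' γ hq) hM
      have hval : (∫ α in (-Real.pi)..Real.pi, ff' γ 0 u α) = 0 := by
        simp only [ff'_zero]
        rw [intervalIntegral.integral_const_mul, integral_cos]
        simp [Real.sin_pi]
      rw [hval] at hinner
      have := hinner.mul_const (h u)
      simpa using this
  simpa using hres

lemma restrict_to_interval (h : ℝ → ℝ) {a₀ a₁ : ℝ} (ha₀ : 0 < a₀) (ha₁ : a₀ < a₁)
    (hsupp : Function.support h ⊆ Set.Icc a₀ a₁) (F : ℝ → ℝ) :
    ∫ u in Set.Ioi (0:ℝ), F u * h u = ∫ u in a₀..a₁, F u * h u := by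
  have hz : ∀ u, u ∉ Set.Icc a₀ a₁ → F u * h u = 0 := fun u hu => by
    rw [Function.notMem_support.mp (fun hs => hu (hsupp hs)), mul_zero]
  have e1 : ∫ u in Set.Ioi (0:ℝ), F u * h u = ∫ u, F u * h u := by
    apply MeasureTheory.setIntegral_eq_integral_of_forall_compl_eq_zero
    intro u hu
    apply hz
    intro hicc
    exact hu (lt_of_lt_of_le ha₀ hicc.1)
  have e2 : ∫ u in Set.Icc a₀ a₁, F u * h u = ∫ u, F u * h u :=
    MeasureTheory.setIntegral_eq_integral_of_forall_compl_eq_zero hz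
  rw [e1, ← e2, MeasureTheory.integral_Icc_eq_integral_Ioc,
    ← intervalIntegral.integral_of_le ha₁.le]

lemma kernel_eq (γ : ℝ) {lam ρ : ℝ} (hlam : 0 < lam) (hρ : 0 < ρ) (hγ3 : (0:ℝ) < 3+γ)
    (r' α : ℝ) :
    r' * (ρ - r' * Real.cos α) / |ρ^2 + r'^2 - 2*ρ*r'*Real.cos α| ^ ((3+γ)/2)
      = ρ^(-((2:ℝ)+γ)) * (lam⁻¹ * ff γ (1/(lam*ρ)) (lam*r') α) := by
  have hlamne : lam ≠ 0 := hlam.ne'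
  have hρne : ρ ≠ 0 := hρ.ne'
  have hA : ρ^2 + r'^2 - 2*ρ*r'*Real.cos α = ρ^2 * qq (1/(lam*ρ)) (lam*r') α := by
    unfold qq; field_simp; ring
  rw [hA, abs_of_nonneg (mul_nonneg (sq_nonneg ρ) (qq_nonneg _ _ α))]
  rcases eq_or_lt_of_le (qq_nonneg (1/(lam*ρ)) (lam*r') α) with hq0 | hqpos
  · unfold ff
    rw [← hq0, mul_zero, Real.zero_rpow (by positivity : (3+γ)/2 ≠ 0), div_zero,
      Real.zero_rpow (by simp; positivity : -((3+γ)/2) ≠ 0)]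
    ring
  · have hqne : qq (1/(lam*ρ)) (lam*r') α ≠ 0 := hqpos.ne'
    have hqs : (0:ℝ) < qq (1/(lam*ρ)) (lam*r') α ^ ((3+γ)/2) :=
      Real.rpow_pos_of_pos hqpos _
    have hρs : (0:ℝ) < ρ^((2:ℝ)+γ) := Real.rpow_pos_of_pos hρ _
    rw [Real.mul_rpow (sq_nonneg ρ) (qq_nonneg _ _ α)]
    have hρ2 : (ρ^2) ^ ((3+γ)/2) = ρ^((2:ℝ)+γ) * ρ := by
      rw [← Real.rpow_natCast ρ 2, ← Real.rpow_mul hρ.le,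
        show ((2:ℕ):ℝ) * ((3+γ)/2) = ((2:ℝ)+γ) + 1 by push_cast; ring,
        Real.rpow_add hρ, Real.rpow_one]
    rw [hρ2, Real.rpow_neg hρ.le]
    unfold ff
    rw [Real.rpow_neg hqpos.le]
    generalize hS : qq (1/(lam*ρ)) (lam*r') α ^ ((3+γ)/2) = S
    have hSne : S ≠ 0 := by rw [← hS]; exact hqs.ne'
    field_simp

lemma formula (γ : ℝ) (h : ℝ → ℝ) {a₀ a₁ : ℝ} (ha₀ : 0 < a₀) (ha₁ : a₀ < a₁)
    (hsupp : Function.support h ⊆ Set.Icc a₀ a₁) (hγ3 : (0:ℝ) < 3+γ)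
    {lam ρ : ℝ} (hlam : 0 < lam) (hρ : 0 < ρ) :
    vAlphaNP γ (fun u => lam^2 * h (lam*u)) ρ / ρ
      = Cgamma γ * (ρ^(-((3:ℝ)+γ)) * Xi γ h a₀ a₁ (1/(lam*ρ))) := by
  have hπpos := Real.pi_pos
  have hππ : -Real.pi ≤ Real.pi := by linarith
  unfold vAlphaNP
  have hpt : ∀ r' : ℝ,
      (∫ α' in Set.Icc (-Real.pi) Real.pi,
        r' * (ρ^2 + r'^2 - 2*ρ*r'*Real.cos α' : ℝ)⁻¹ * 0)
      = 0 := fun _ => by simp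
  -- pointwise identity for the inner integral
  have hinner : ∀ r' : ℝ,
      (∫ α' in Set.Icc (-Real.pi) Real.pi,
        r' * (ρ - r' * Real.cos α') /
          |ρ^2 + r'^2 - 2*ρ*r'*Real.cos α'|^((3+γ)/2) * (lam^2 * h (lam*r')))
      = (fun u => (ρ^(-((2:ℝ)+γ)) * lam * ∫ α' in (-Real.pi)..Real.pi, ff γ (1/(lam*ρ)) u α')
          * h u) (lam * r') := by
    intro r'
    have e : ∀ α' : ℝ,
        r' * (ρ - r' * Real.cos α') /
          |ρ^2 + r'^2 - 2*ρ*r'*Real.cos α'|^((3+γ)/2) * (lam^2 * h (lam*r'))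
        = (ρ^(-((2:ℝ)+γ)) * lam * h (lam*r')) * ff γ (1/(lam*ρ)) (lam*r') α' := by
      intro α'
      rw [kernel_eq γ hlam hρ hγ3 r' α']
      field_simp
    simp only [e]
    rw [MeasureTheory.integral_const_mul, MeasureTheory.integral_Icc_eq_integral_Ioc,
      ← intervalIntegral.integral_of_le hππ]
    ring
  simp only [hinner]
  rw [MeasureTheory.integral_comp_mul_left_Ioi
    (fun u => (ρ^(-((2:ℝ)+γ)) * lam * ∫ α' in (-Real.pi)..Real.pi, ff γ (1/(lam*ρ)) u α') * h u)
    0 hlam, mul_zero, smul_eq_mul]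
  rw [restrict_to_interval h ha₀ ha₁ hsupp
    (fun u => ρ^(-((2:ℝ)+γ)) * lam * ∫ α' in (-Real.pi)..Real.pi, ff γ (1/(lam*ρ)) u α')]
  have hassoc : (fun u => (ρ^(-((2:ℝ)+γ)) * lam * ∫ α' in (-Real.pi)..Real.pi, ff γ (1/(lam*ρ)) u α') * h u)
      = fun u => (ρ^(-((2:ℝ)+γ)) * lam) *
          ((∫ α' in (-Real.pi)..Real.pi, ff γ (1/(lam*ρ)) u α') * h u) :=
    funext fun u => by ring
  rw [hassoc, intervalIntegral.integral_const_mul]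
  have hXi : (∫ u in a₀..a₁, (∫ α' in (-Real.pi)..Real.pi, ff γ (1/(lam*ρ)) u α') * h u)
      = Xi γ h a₀ a₁ (1/(lam*ρ)) := rfl
  rw [hXi]
  have hrw : ρ^(-((2:ℝ)+γ)) = ρ^(-((3:ℝ)+γ)) * ρ := by
    rw [← Real.rpow_add_one hρ.ne']
    congr 1
    ring
  rw [hrw]
  field_simp

lemma hasDeriv_formula (γ : ℝ) (h : ℝ → ℝ) (hc : Continuous h) {a₀ a₁ lam r : ℝ}
    (ha₀ : 0 < a₀) (ha₁ : a₀ < a₁) (hr : 0 < r) (hlam : 0 < lam)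
    (ht : |1/(lam*r)| < (2*a₁)⁻¹) :
    HasDerivAt (fun ρ => Cgamma γ * (ρ^(-((3:ℝ)+γ)) * Xi γ h a₀ a₁ (1/(lam*ρ))))
      (Cgamma γ * (r^(-((4:ℝ)+γ)) *
        (-((3+γ) * Xi γ h a₀ a₁ (1/(lam*r)) + (1/(lam*r)) * Xi' γ h a₀ a₁ (1/(lam*r)))))) r := by
  have hA : HasDerivAt (fun ρ : ℝ => ρ^(-((3:ℝ)+γ))) (-((3:ℝ)+γ) * r^(-((3:ℝ)+γ)-1)) r :=
    Real.hasDerivAt_rpow_const (Or.inl hr.ne')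
  have hB : HasDerivAt (fun ρ : ℝ => 1/(lam*ρ)) (-(lam/(lam*r)^2)) r := by
    have h1 : HasDerivAt (fun ρ : ℝ => lam*ρ) lam r := by
      simpa using (hasDerivAt_id r).const_mul lam
    have h2 := h1.inv (by positivity : lam*r ≠ 0)
    have h3 : (fun ρ : ℝ => 1/(lam*ρ)) = (fun ρ => lam*ρ)⁻¹ := by funext ρ; simp [one_div]
    rw [h3, ← neg_div]; exact h2
  have hC : HasDerivAt (Xi γ h a₀ a₁) (Xi' γ h a₀ a₁ (1/(lam*r))) (1/(lam*r)) :=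
    hasDeriv_Xi γ h hc ha₀ ha₁ ht
  have hD : HasDerivAt (fun ρ => Xi γ h a₀ a₁ (1/(lam*ρ)))
      (Xi' γ h a₀ a₁ (1/(lam*r)) * -(lam/(lam*r)^2)) r := by have := hC.comp r hB; exact this
  have hE := (hA.mul hD).const_mul (Cgamma γ)
  refine hE.congr_deriv ?_
  set X := Xi γ h a₀ a₁ (1/(lam*r))
  set X' := Xi' γ h a₀ a₁ (1/(lam*r))
  have e1 : r^(-((3:ℝ)+γ)-1) = r^(-((4:ℝ)+γ)) := by congr 1; ring
  have e2 : r^(-((3:ℝ)+γ)) = r^(-((4:ℝ)+γ)) * r := by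
    rw [← Real.rpow_add_one hr.ne']; congr 1; ring
  rw [e1, e2]
  have hrne : r ≠ 0 := hr.ne'
  have hlamne : lam ≠ 0 := hlam.ne'
  field_simp
  ring

/-- Concentrating rescalings `g_λ(r) = λ² h(λ r)` of a profile of unit mass
produce, in the limit `λ → ∞`,
`∂_r (v^γ_α(g_λ)(r)/r) → -2π(3+γ)C(γ)/r^{4+γ}` at each fixed `r > 0`. -/
theorem deriv_vAlpha_concentration_limit
    (h : ℝ → ℝ) (hh : ContDiff ℝ (⊤ : ℕ∞) h) (a₀ a₁ : ℝ) (ha₀ : 0 < a₀) (ha₁ : a₀ < a₁)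
    (hsupp : Function.support h ⊆ Set.Icc a₀ a₁)
    (hmass : ∫ s in Set.Ioi (0 : ℝ), s * h s = 1)
    (γ : ℝ) (hγ : γ ∈ Set.Ico (-1 : ℝ) 1) (r : ℝ) (hr : 0 < r) :
    Tendsto (fun lam : ℝ =>
        deriv (fun ρ => vAlphaNP γ (fun u => lam ^ 2 * h (lam * u)) ρ / ρ) r)
      atTop (nhds (-(2 * Real.pi * (3 + γ) * Cgamma γ) / r ^ (4 + γ))) := by
  have hγ3 : (0:ℝ) < 3 + γ := by have := hγ.1; linarith
  have hc : Continuous h := hh.continuous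
  have ha₁pos : 0 < a₁ := ha₀.trans ha₁
  have hkey : ∀ lam : ℝ, 2*a₁/r < lam → 1/(lam*r) < (2*a₁)⁻¹ := by
    intro lam hlam2
    have h2 : 2*a₁ < lam*r := (div_lt_iff₀ hr).mp hlam2
    have := one_div_lt_one_div_of_lt (by positivity : (0:ℝ) < 2*a₁) h2
    rw [one_div (2*a₁)] at this
    exact this
  have hev : ∀ᶠ lam : ℝ in atTop,
      deriv (fun ρ => vAlphaNP γ (fun u => lam ^ 2 * h (lam * u)) ρ / ρ) r
      = Cgamma γ * (r^(-((4:ℝ)+γ)) *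
          (-((3+γ) * Xi γ h a₀ a₁ (1/(lam*r)) + (1/(lam*r)) * Xi' γ h a₀ a₁ (1/(lam*r))))) := by
    filter_upwards [eventually_gt_atTop 0, eventually_gt_atTop (2*a₁/r)] with lam hlam hlam2
    have htlt : |1/(lam*r)| < (2*a₁)⁻¹ := by
      rw [abs_of_pos (by positivity)]
      exact hkey lam hlam2
    have heq : (fun ρ => vAlphaNP γ (fun u => lam ^ 2 * h (lam * u)) ρ / ρ)
        =ᶠ[nhds r] (fun ρ => Cgamma γ * (ρ^(-((3:ℝ)+γ)) * Xi γ h a₀ a₁ (1/(lam*ρ)))) := by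
      filter_upwards [lt_mem_nhds hr] with ρ hρ
      exact formula γ h ha₀ ha₁ hsupp hγ3 hlam hρ
    rw [heq.deriv_eq]
    exact (hasDeriv_formula γ h hc ha₀ ha₁ hr hlam htlt).deriv
  have htt : Tendsto (fun lam : ℝ => 1/(lam*r)) atTop
      (nhdsWithin 0 (Set.Ioo 0 ((2*a₁)⁻¹))) := by
    rw [tendsto_nhdsWithin_iff]
    constructor
    · have h1 : Tendsto (fun lam : ℝ => lam*r) atTop atTop :=
        Tendsto.atTop_mul_const hr tendsto_id
      simpa [one_div, Pi.inv_def, mul_comm] using h1.inv_tendsto_atTop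
    · filter_upwards [eventually_gt_atTop 0, eventually_gt_atTop (2*a₁/r)] with lam h1 h2
      exact ⟨by positivity, hkey lam h2⟩
  have htz : Tendsto (fun lam : ℝ => 1/(lam*r)) atTop (nhds 0) :=
    htt.mono_right nhdsWithin_le_nhds
  have hmass' : (∫ u in a₀..a₁, (2*Real.pi*u) * h u) = 2*Real.pi := by
    have e : (fun u => (2*Real.pi*u) * h u) = fun u => (2*Real.pi) * (u * h u) :=
      funext fun u => by ring
    rw [e, intervalIntegral.integral_const_mul,
      ← restrict_to_interval h ha₀ ha₁ hsupp (fun u => u), hmass, mul_one]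
  have hXl : Tendsto (fun lam : ℝ => Xi γ h a₀ a₁ (1/(lam*r))) atTop (nhds (2*Real.pi)) := by
    have := (tendsto_Xi γ h hc ha₀ ha₁).comp htt
    rw [hmass'] at this
    exact this
  have hX'l : Tendsto (fun lam : ℝ => Xi' γ h a₀ a₁ (1/(lam*r))) atTop (nhds 0) :=
    (tendsto_Xi' γ h hc ha₀ ha₁).comp htt
  have hfinal : Tendsto (fun lam : ℝ => Cgamma γ * (r^(-((4:ℝ)+γ)) *
      (-((3+γ) * Xi γ h a₀ a₁ (1/(lam*r)) + (1/(lam*r)) * Xi' γ h a₀ a₁ (1/(lam*r))))))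
      atTop (nhds (Cgamma γ * (r^(-((4:ℝ)+γ)) * (-((3+γ) * (2*Real.pi) + 0 * 0))))) := by
    apply Tendsto.const_mul
    apply Tendsto.const_mul
    apply Tendsto.neg
    exact (hXl.const_mul _).add (htz.mul hX'l)
  have hval : Cgamma γ * (r^(-((4:ℝ)+γ)) * (-((3+γ) * (2*Real.pi) + 0*0)))
      = -(2 * Real.pi * (3 + γ) * Cgamma γ) / r ^ ((4:ℝ) + γ) := by
    rw [Real.rpow_neg hr.le, div_eq_mul_inv]
    ring
  rw [hval] at hfinal
  exact Tendsto.congr' (hev.mono fun lam e => e.symm) hfinal
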